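/- If the coefficient of q^{ℓ(a)+ℓ(a'')} in f(a,a',a'',a') is nonzero, then the support of a is contained in the left descent set of a' and the support of a'' is contained in the right descent set of a'. -/

import Mathlib

open Polynomial

/-- The support of `w`: the set of simple-reflection indices appearing in some
(equivalently, any) reduced word for `w`. -/
def CoxeterSystem.support {B W : Type} [Group W] {M : CoxeterMatrix B}
    (cs : CoxeterSystem M W) (w : W) : Set B :=
  {i | ∃ l : List B, cs.IsReduced l ∧ cs.wordProd l = w ∧ i ∈ l}

/-!
Write `[x]_b` for the coefficient of `T_b` in `x`, and call `x` bounded by `(n, w₀)` when every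
`[x]_b` has degree at most `n` and at most `n + ℓ(w₀) - ℓ(b)`. `T_{w₀}` is bounded by `(0, w₀)`,
and multiplying by some `T_s` on either side turns a bound `(n, w₀)` into `(n + 1, w₀)`. For `x`
bounded by `(n, w₀)`, the coefficient of `q^{n+1}` in `[T_s x]_{w₀}` vanishes unless `s` is a left
descent of `w₀`, and then it is the coefficient of `q^n` in `[x]_{w₀}`. Peeling the letters of a
reduced word for `a` off `T_a (T_{a'} T_{a''})` one at a time shows that each of them is a left
descent of `a'`. The claim about `a''` is the same statement in the opposite algebra with the basis
`T_{w⁻¹}`, which again satisfies the Hecke relations.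
-/

theorem Polynomial.exists_eq_succ_of_coeff_X_mul_ne_zero {R : Type*} [Semiring R] {p : R[X]}
    {k : ℕ} (h : (X * p).coeff k ≠ 0) : ∃ j, k = j + 1 ∧ p.coeff j ≠ 0 := by
  rcases k with _ | j
  · simp at h
  · exact ⟨j, rfl, by rwa [coeff_X_mul] at h⟩

namespace Module.Basis

variable {W R H : Type*} [Group W] [Semiring R] [AddCommMonoid H] [Module R H]

noncomputable def opInv (T : Basis W R H) : Basis W R Hᵐᵒᵖ :=
  (T.map (MulOpposite.opLinearEquiv R)).reindex (Equiv.inv W)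

@[simp]
theorem opInv_apply (T : Basis W R H) (w : W) : T.opInv w = MulOpposite.op (T w⁻¹) := by
  simp [opInv]

@[simp]
theorem opInv_repr_op (T : Basis W R H) (x : H) (w : W) :
    T.opInv.repr (MulOpposite.op x) w = T.repr x w⁻¹ := by
  rw [opInv, repr_reindex_apply]
  simp

end Module.Basis

namespace CoxeterSystem

section Hecke

variable {B W : Type*} [Group W] {M : CoxeterMatrix B} (cs : CoxeterSystem M W)
  {R H : Type*} [CommRing R] [Ring H] [Algebra R[X] H]

structure IsHeckeBasis (T : Module.Basis W R[X] H) : Prop where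
  one : T 1 = 1
  mul_of_length_add : ∀ w w' : W, cs.length (w * w') = cs.length w + cs.length w' →
    T w * T w' = T (w * w')
  quadratic : ∀ i : B, (T (cs.simple i) + 1) * (T (cs.simple i) - algebraMap R[X] H X) = 0

namespace IsHeckeBasis

variable {cs} {T : Module.Basis W R[X] H}

theorem simple_mul_self (hT : cs.IsHeckeBasis T) (i : B) :
    T (cs.simple i) * T (cs.simple i) = (X - 1 : R[X]) • T (cs.simple i) + (X : R[X]) • 1 := by
  have h := hT.quadratic i
  rw [Algebra.algebraMap_eq_smul_one, add_mul, mul_sub, mul_sub, mul_smul_comm, mul_one,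
    one_mul (T _), one_mul, sub_add_sub_comm, sub_eq_zero] at h
  rw [sub_smul, one_smul, ← add_sub_cancel_right (T (cs.simple i) * T (cs.simple i)) (T _), h]
  abel

theorem simple_mul_of_not_isLeftDescent (hT : cs.IsHeckeBasis T) {i : B} {w : W}
    (hw : ¬cs.IsLeftDescent w i) : T (cs.simple i) * T w = T (cs.simple i * w) :=
  hT.mul_of_length_add _ _ <| by rw [cs.length_simple, cs.not_isLeftDescent_iff.mp hw, add_comm]

theorem simple_mul_of_isLeftDescent (hT : cs.IsHeckeBasis T) {i : B} {w : W}
    (hw : cs.IsLeftDescent w i) :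
    T (cs.simple i) * T w = (X : R[X]) • T (cs.simple i * w) + (X - 1 : R[X]) • T w := by
  have hsw : T (cs.simple i) * T (cs.simple i * w) = T w := by
    rw [hT.simple_mul_of_not_isLeftDescent (cs.isLeftDescent_iff_not_isLeftDescent_mul.mp hw),
      cs.simple_mul_simple_cancel_left]
  calc T (cs.simple i) * T w
      = T (cs.simple i) * T (cs.simple i) * T (cs.simple i * w) := by rw [mul_assoc, hsw]
    _ = (X : R[X]) • T (cs.simple i * w) + (X - 1 : R[X]) • T w := by
      rw [hT.simple_mul_self, add_mul, smul_mul_assoc, smul_mul_assoc, one_mul, hsw, add_comm]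

theorem repr_simple_mul_of_isLeftDescent (hT : cs.IsHeckeBasis T) {i : B} {b : W}
    (hb : cs.IsLeftDescent b i) (x : H) :
    T.repr (T (cs.simple i) * x) b = T.repr x (cs.simple i * b) + (X - 1) * T.repr x b := by
  suffices h : Finsupp.lapply b ∘ₗ T.repr.toLinearMap ∘ₗ LinearMap.mulLeft R[X] (T (cs.simple i))
      = Finsupp.lapply (cs.simple i * b) ∘ₗ T.repr.toLinearMap
        + (X - 1 : R[X]) • (Finsupp.lapply b ∘ₗ T.repr.toLinearMap) by
    simpa using LinearMap.congr_fun h x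
  classical
  refine T.ext fun c => ?_
  have hsc : cs.simple i * c = b ↔ c = cs.simple i * b := by
    constructor <;> rintro rfl <;> simp
  by_cases hc : cs.IsLeftDescent c i
  · have hcb : c ≠ cs.simple i * b := by
      rintro rfl; exact cs.isLeftDescent_iff_not_isLeftDescent_mul.mp hb hc
    obtain rfl | hcb' := eq_or_ne c b
    · simp [hT.simple_mul_of_isLeftDescent hc, hsc, hcb]
    · simp [hT.simple_mul_of_isLeftDescent hc, hsc, hcb, hcb']
  · have hcb : c ≠ b := by rintro rfl; exact hc hb
    simp [hT.simple_mul_of_not_isLeftDescent hc, Finsupp.single_apply, hsc, hcb]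

theorem repr_simple_mul_of_not_isLeftDescent (hT : cs.IsHeckeBasis T) {i : B} {b : W}
    (hb : ¬cs.IsLeftDescent b i) (x : H) :
    T.repr (T (cs.simple i) * x) b = X * T.repr x (cs.simple i * b) := by
  suffices h : Finsupp.lapply b ∘ₗ T.repr.toLinearMap ∘ₗ LinearMap.mulLeft R[X] (T (cs.simple i))
      = (X : R[X]) • (Finsupp.lapply (cs.simple i * b) ∘ₗ T.repr.toLinearMap) by
    simpa using LinearMap.congr_fun h x
  classical
  refine T.ext fun c => ?_
  have hsc : cs.simple i * c = b ↔ c = cs.simple i * b := by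
    constructor <;> rintro rfl <;> simp
  by_cases hc : cs.IsLeftDescent c i
  · have hcb : c ≠ b := by rintro rfl; exact hb hc
    simp [hT.simple_mul_of_isLeftDescent hc, Finsupp.single_apply, hsc, hcb]
  · have hcb : c ≠ cs.simple i * b := by
      rintro rfl; exact hc (cs.isLeftDescent_iff_not_isLeftDescent_mul.mpr (by simpa using hb))
    simp [hT.simple_mul_of_not_isLeftDescent hc, hsc, hcb]

end IsHeckeBasis

def DegreeBounded (T : Module.Basis W R[X] H) (n : ℕ) (w₀ : W) (x : H) : Prop :=
  ∀ b k, (T.repr x b).coeff k ≠ 0 → k ≤ n ∧ k + cs.length b ≤ n + cs.length w₀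

variable {cs} {T : Module.Basis W R[X] H}

theorem DegreeBounded.coeff_eq_zero {n : ℕ} {w₀ : W} {x : H} (hx : cs.DegreeBounded T n w₀ x)
    (b : W) (k : ℕ) (h : n < k ∨ n + cs.length w₀ < k + cs.length b) :
    (T.repr x b).coeff k = 0 := by
  by_contra hk
  have := hx b k hk
  omega

theorem degreeBounded_self (w₀ : W) : cs.DegreeBounded T 0 w₀ (T w₀) := by
  intro b k hk
  obtain rfl | hb := eq_or_ne w₀ b
  · have hk0 : k = 0 := by by_contra h0; simp [coeff_one, h0] at hk
    omega
  · simp [Finsupp.single_eq_of_ne' hb] at hk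

theorem DegreeBounded.simple_mul (hT : cs.IsHeckeBasis T) {n : ℕ} {w₀ : W} {x : H}
    (hx : cs.DegreeBounded T n w₀ x) (i : B) :
    cs.DegreeBounded T (n + 1) w₀ (T (cs.simple i) * x) := by
  intro b k hk
  by_cases hb : cs.IsLeftDescent b i
  · have hlen := cs.isLeftDescent_iff.mp hb
    rw [hT.repr_simple_mul_of_isLeftDescent hb, sub_mul, one_mul, coeff_add, coeff_sub] at hk
    have : (T.repr x (cs.simple i * b)).coeff k ≠ 0 ∨ (X * T.repr x b).coeff k ≠ 0 ∨
        (T.repr x b).coeff k ≠ 0 := by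
      by_contra! h; simp [h] at hk
    rcases this with h | h | h
    · have := hx _ _ h; omega
    · obtain ⟨j, rfl, hj⟩ := exists_eq_succ_of_coeff_X_mul_ne_zero h
      have := hx _ _ hj; omega
    · have := hx _ _ h; omega
  · have hlen := cs.not_isLeftDescent_iff.mp hb
    rw [hT.repr_simple_mul_of_not_isLeftDescent hb] at hk
    obtain ⟨j, rfl, hj⟩ := exists_eq_succ_of_coeff_X_mul_ne_zero hk
    have := hx _ _ hj; omega

theorem DegreeBounded.isLeftDescent_of_coeff_simple_mul (hT : cs.IsHeckeBasis T) {n : ℕ}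
    {w₀ : W} {x : H} (hx : cs.DegreeBounded T n w₀ x) {i : B}
    (h : (T.repr (T (cs.simple i) * x) w₀).coeff (n + 1) ≠ 0) :
    cs.IsLeftDescent w₀ i ∧ (T.repr x w₀).coeff n ≠ 0 := by
  by_cases hw₀ : cs.IsLeftDescent w₀ i
  · have hlen := cs.isLeftDescent_iff.mp hw₀
    have h₁ := hx.coeff_eq_zero (cs.simple i * w₀) (n + 1) (by omega)
    have h₂ := hx.coeff_eq_zero w₀ (n + 1) (by omega)
    rw [hT.repr_simple_mul_of_isLeftDescent hw₀, sub_mul, one_mul, coeff_add, coeff_sub,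
      coeff_X_mul, h₁, h₂] at h
    exact ⟨hw₀, by simpa using h⟩
  · have hlen := cs.not_isLeftDescent_iff.mp hw₀
    rw [hT.repr_simple_mul_of_not_isLeftDescent hw₀, coeff_X_mul,
      hx.coeff_eq_zero (cs.simple i * w₀) n (by omega)] at h
    exact absurd rfl h

theorem IsHeckeBasis.wordProd_eq_prod (hT : cs.IsHeckeBasis T) {l : List B} (hl : cs.IsReduced l) :
    T (cs.wordProd l) = (l.map fun i => T (cs.simple i)).prod := by
  induction l with
  | nil => simpa using hT.one
  | cons i l ih =>
    have hl' : cs.IsReduced l := by simpa using hl.drop 1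
    rw [List.map_cons, List.prod_cons, ← ih hl', cs.wordProd_cons, hT.mul_of_length_add]
    have := hl.eq
    rw [cs.wordProd_cons, List.length_cons] at this
    rw [this, cs.length_simple, hl'.eq, add_comm]

theorem DegreeBounded.list_prod_mul (hT : cs.IsHeckeBasis T) {n : ℕ} {w₀ : W} {x : H}
    (hx : cs.DegreeBounded T n w₀ x) (l : List B) :
    cs.DegreeBounded T (l.length + n) w₀ ((l.map fun i => T (cs.simple i)).prod * x) := by
  induction l with
  | nil => simpa using hx
  | cons i l ih =>
    rw [List.map_cons, List.prod_cons, mul_assoc, List.length_cons, add_right_comm]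
    exact ih.simple_mul hT i

theorem DegreeBounded.mul (hT : cs.IsHeckeBasis T) {n : ℕ} {w₀ : W} {x : H}
    (hx : cs.DegreeBounded T n w₀ x) (w : W) :
    cs.DegreeBounded T (cs.length w + n) w₀ (T w * x) := by
  obtain ⟨l, hl, rfl⟩ := cs.exists_isReduced w
  rw [hT.wordProd_eq_prod hl, hl.eq]
  exact hx.list_prod_mul hT l

theorem DegreeBounded.isLeftDescent_of_coeff_list_prod_mul (hT : cs.IsHeckeBasis T) {n : ℕ}
    {w₀ : W} {x : H} (hx : cs.DegreeBounded T n w₀ x) {l : List B}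
    (h : (T.repr ((l.map fun i => T (cs.simple i)).prod * x) w₀).coeff (l.length + n) ≠ 0) :
    ∀ i ∈ l, cs.IsLeftDescent w₀ i := by
  induction l with
  | nil => simp
  | cons i l ih =>
    rw [List.map_cons, List.prod_cons, mul_assoc, List.length_cons, add_right_comm] at h
    obtain ⟨hi, hl⟩ := (hx.list_prod_mul hT l).isLeftDescent_of_coeff_simple_mul hT h
    exact List.forall_mem_cons.mpr ⟨hi, ih hl⟩

theorem IsHeckeBasis.opInv (hT : cs.IsHeckeBasis T) : cs.IsHeckeBasis T.opInv where
  one := by simp [hT.one]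
  mul_of_length_add w w' h := by
    rw [T.opInv_apply, T.opInv_apply, T.opInv_apply, ← MulOpposite.op_mul, hT.mul_of_length_add,
      mul_inv_rev]
    rwa [← mul_inv_rev, cs.length_inv, cs.length_inv, cs.length_inv, add_comm]
  quadratic i := by
    have hcomm : Commute (T (cs.simple i) + 1) (T (cs.simple i) - algebraMap R[X] H X) :=
      ((Commute.refl _).sub_right (Algebra.commute_algebraMap_right X _)).add_left
        ((Commute.one_left _).sub_right (Commute.one_left _))
    rw [T.opInv_apply, cs.inv_simple, MulOpposite.algebraMap_apply, ← MulOpposite.op_one,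
      ← MulOpposite.op_add, ← MulOpposite.op_sub, ← MulOpposite.op_mul, ← hcomm.eq,
      hT.quadratic, MulOpposite.op_zero]

theorem degreeBounded_opInv_op_iff {n : ℕ} {w₀ : W} {x : H} :
    cs.DegreeBounded T.opInv n w₀⁻¹ (MulOpposite.op x) ↔ cs.DegreeBounded T n w₀ x := by
  simp only [DegreeBounded, T.opInv_repr_op, cs.length_inv]
  refine ⟨fun h b => ?_, fun h b => ?_⟩ <;> simpa [cs.length_inv] using h b⁻¹

theorem DegreeBounded.mul_right (hT : cs.IsHeckeBasis T) {n : ℕ} {w₀ : W} {x : H}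
    (hx : cs.DegreeBounded T n w₀ x) (w : W) :
    cs.DegreeBounded T (cs.length w + n) w₀ (x * T w) := by
  have := (degreeBounded_opInv_op_iff.mpr hx).mul hT.opInv w⁻¹
  rwa [T.opInv_apply, inv_inv, ← MulOpposite.op_mul, cs.length_inv,
    degreeBounded_opInv_op_iff] at this

end Hecke

section Support

variable {B W : Type} [Group W] {M : CoxeterMatrix B} (cs : CoxeterSystem M W)
  {R H : Type*} [CommRing R] [Ring H] [Algebra R[X] H]

theorem support_inv (w : W) : cs.support w⁻¹ = cs.support w := by
  suffices h : ∀ w : W, cs.support w ⊆ cs.support w⁻¹ from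
    le_antisymm (by simpa using h w⁻¹) (h w)
  rintro w i ⟨l, hl, rfl, hi⟩
  exact ⟨l.reverse, hl.reverse, cs.wordProd_reverse l, List.mem_reverse.mpr hi⟩

variable {cs} {T : Module.Basis W R[X] H}

theorem IsHeckeBasis.isLeftDescent_of_mem_support (hT : cs.IsHeckeBasis T) {a a' a'' : W}
    (h : (T.repr (T a * T a' * T a'') a').coeff (cs.length a + cs.length a'') ≠ 0) {i : B}
    (hi : i ∈ cs.support a) : cs.IsLeftDescent a' i := by
  obtain ⟨l, hl, rfl, hil⟩ := hi
  have hy : cs.DegreeBounded T (cs.length a'' + 0) a' (T a' * T a'') :=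
    (degreeBounded_self a').mul_right hT a''
  rw [mul_assoc, hT.wordProd_eq_prod hl, hl.eq, ← add_zero (cs.length a'')] at h
  exact hy.isLeftDescent_of_coeff_list_prod_mul hT h i hil

end Support

end CoxeterSystem

theorem hecke_triple_product_diagonal_coeff_ne_zero_general
    {B W : Type} [Group W] {M : CoxeterMatrix B} (cs : CoxeterSystem M W)
    (H : Type) [Ring H] [Algebra (Polynomial ℚ) H]
    (T : Module.Basis W (Polynomial ℚ) H)
    (hone : T 1 = 1)
    (hmul : ∀ w w' : W, cs.length (w * w') = cs.length w + cs.length w' →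
      T w * T w' = T (w * w'))
    (hquad : ∀ i : B, (T (cs.simple i) + 1) * (T (cs.simple i) - algebraMap (Polynomial ℚ) H X) = 0)
    (a a' a'' : W)
    (h : (T.repr (T a * T a' * T a'') a').coeff (cs.length a + cs.length a'') ≠ 0) :
    (∀ i ∈ cs.support a, cs.IsLeftDescent a' i) ∧
    (∀ i ∈ cs.support a'', cs.IsRightDescent a' i) := by
  have hT : cs.IsHeckeBasis T := ⟨hone, hmul, hquad⟩
  refine ⟨fun i hi => hT.isLeftDescent_of_mem_support h hi, fun i hi => ?_⟩
  have h' : (T.opInv.repr (T.opInv a''⁻¹ * T.opInv a'⁻¹ * T.opInv a⁻¹) a'⁻¹).coeff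
      (cs.length a''⁻¹ + cs.length a⁻¹) ≠ 0 := by
    simpa [← MulOpposite.op_mul, mul_assoc, cs.length_inv, add_comm] using h
  rw [← cs.support_inv] at hi
  exact cs.isLeftDescent_inv_iff.mp (hT.opInv.isLeftDescent_of_mem_support h' hi)

/-- if the coefficient of `q^{ℓ(a)+ℓ(a'')}` in `f(a,a',a'',a')` is nonzero,
then the support of `a` is contained in the left descent set of `a'` and the support of
`a''` is contained in the right descent set of `a'`. -/
theorem hecke_triple_product_diagonal_coeff_ne_zero
    {B W : Type} [Group W] [Finite W] {M : CoxeterMatrix B} (cs : CoxeterSystem M W)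
    (H : Type) [Ring H] [Algebra (Polynomial ℚ) H]
    (T : Module.Basis W (Polynomial ℚ) H)
    (hone : T 1 = 1)
    (hmul : ∀ w w' : W, cs.length (w * w') = cs.length w + cs.length w' →
      T w * T w' = T (w * w'))
    (hquad : ∀ i : B, (T (cs.simple i) + 1) * (T (cs.simple i) - algebraMap (Polynomial ℚ) H X) = 0)
    (a a' a'' : W)
    (h : (T.repr (T a * T a' * T a'') a').coeff (cs.length a + cs.length a'') ≠ 0) :
    (∀ i ∈ cs.support a, cs.IsLeftDescent a' i) ∧
    (∀ i ∈ cs.support a'', cs.IsRightDescent a' i) :=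
  hecke_triple_product_diagonal_coeff_ne_zero_general cs H T hone hmul hquad a a' a'' h
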